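/- Let R = k[x,y]_{(x,y)} with maximal ideal m, I_n = (x^n) and J_n = (x^{n+1}, x^n y). Then for all n ≥ 1: J_n ⊆ I_n, J_n : m^∞ = (x^n), and λ_R((J_n : m^∞)/J_n) = 1. Consequently ε({J_n}) = lim 2·λ_R((J_n:m^∞)/J_n)/n^2 = 0 = ε({I_n}). -/

import Mathlib

set_option synthInstance.maxHeartbeats 1000000
set_option maxHeartbeats 2000000

open MvPolynomial

noncomputable abbrev mxy (k : Type*) [Field k] : Ideal (MvPolynomial (Fin 2) k) :=
  Ideal.span {X 0, X 1}

noncomputable abbrev Rxy (k : Type*) [Field k] [(mxy k).IsPrime] : Type _ :=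
  Localization.AtPrime (mxy k)

noncomputable abbrev xx (k : Type*) [Field k] [(mxy k).IsPrime] : Rxy k :=
  algebraMap (MvPolynomial (Fin 2) k) (Rxy k) (X 0)

noncomputable abbrev yy (k : Type*) [Field k] [(mxy k).IsPrime] : Rxy k :=
  algebraMap (MvPolynomial (Fin 2) k) (Rxy k) (X 1)

/-- The saturation `I : J^∞ = ⋃ₖ (I : Jᵏ)`. -/
noncomputable def sat {A : Type*} [CommRing A] (I J : Ideal A) : Ideal A :=
  ⨆ n : ℕ, Submodule.colon I ((J ^ n : Ideal A) : Set A)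

/-- The quotient module `S/I` of two ideals (with `I ⊆ S` in the intended use). -/
noncomputable abbrev idealQuot {A : Type*} [CommRing A] (S I : Ideal A) :=
  S ⧸ (Submodule.comap S.subtype I)

/-- The length of a module, expressed as the Krull dimension of its submodule lattice. -/
noncomputable def mlength (R M : Type*) [CommRing R] [AddCommGroup M] [Module R M] : ℕ∞ :=
  WithBot.unbotD 0 (Order.krullDim (Submodule R M))

/-!
In `R = k[x,y]_(x,y)` the element `x` stays prime (it is prime in `k[x,y]` and lies in `m`)
and does not divide `y`, so `xⁿ ∣ a yʲ` forces `xⁿ ∣ a`. As `yʲ ∈ mʲ`, every `J ⊆ (xⁿ)` has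
`J : m^∞ ⊆ (xⁿ)`; conversely `xⁿ m ⊆ J_n`, so `J_n : m^∞ = (xⁿ)`. Multiplication by `xⁿ` maps
`R` onto `(xⁿ)/J_n` with kernel `m`, so this quotient is simple, of length `1`, and
`2 · 1 / n² → 0`.
-/

lemma mlength_eq_length (R M : Type*) [CommRing R] [AddCommGroup M] [Module R M] :
    mlength R M = Module.length R M := by
  rw [mlength, ← Module.coe_length]
  rfl

section IdealQuotient

variable {A : Type*} [CommRing A]

lemma mem_sat_of_forall_mul_mem {I J : Ideal A} {a : A} (h : ∀ r ∈ J, a * r ∈ I) :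
    a ∈ sat I J :=
  Ideal.mem_iSup_of_mem 1 <| Submodule.mem_colon.mpr fun r hr => h r (by simpa using hr)

lemma le_sat {I J : Ideal A} : I ≤ sat I J :=
  fun _ ha => mem_sat_of_forall_mul_mem fun r _ => I.mul_mem_right r ha

lemma isSimpleModule_idealQuot_span_singleton {a : A} {J M : Ideal A} (hM : M.IsMaximal)
    (hJ : ∀ r, r * a ∈ J ↔ r ∈ M) : IsSimpleModule A (idealQuot (Ideal.span {a}) J) := by
  let φ : A →ₗ[A] idealQuot (Ideal.span {a}) J :=
    (Submodule.mkQ _).comp ((LinearMap.toSpanSingleton A A a).codRestrict _ fun r =>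
      Ideal.mul_mem_left _ r (Ideal.mem_span_singleton_self a))
  have hφ : Function.Surjective φ := by
    intro q
    obtain ⟨⟨z, hz⟩, rfl⟩ := Submodule.Quotient.mk_surjective _ q
    obtain ⟨c, rfl⟩ := Ideal.mem_span_singleton'.mp hz
    exact ⟨c, rfl⟩
  have hker : LinearMap.ker φ = M := by
    ext r
    rw [← hJ]
    exact Submodule.Quotient.mk_eq_zero _
  have : IsSimpleModule A (A ⧸ M) := isSimpleModule_iff_isCoatom.mpr (Ideal.isMaximal_def.mp hM)
  exact IsSimpleModule.congr
    ((φ.quotKerEquivOfSurjective hφ).symm.trans (Submodule.quotEquivOfEq _ _ hker))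

lemma mlength_idealQuot_self (S : Ideal A) : mlength A (idealQuot S S) = 0 := by
  have := Submodule.Quotient.subsingleton_iff.mpr (Submodule.comap_subtype_self S)
  rw [mlength_eq_length, Module.length_eq_zero]

end IdealQuotient

section LocalizationAtPrime

variable {R : Type*} [CommRing R] {P : Ideal R} [P.IsPrime] {p : R}

lemma Localization.AtPrime.algebraMap_dvd_algebraMap_iff (hp : Prime p) (hpP : p ∈ P)
    (b : R) :
    algebraMap R (Localization.AtPrime P) p ∣ algebraMap R (Localization.AtPrime P) b ↔
      p ∣ b := by
  have := (Ideal.span_singleton_prime hp.ne_zero).mpr hp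
  have hunder := Ideal.under_map_of_isLocalizationAtPrime P (S := Localization.AtPrime P)
    ((Ideal.span_singleton_le_iff_mem _).mpr hpP)
  rw [Ideal.map_span, Set.image_singleton] at hunder
  rw [← Ideal.mem_span_singleton, ← Ideal.mem_span_singleton, ← hunder, Ideal.mem_comap]

lemma Localization.AtPrime.prime_algebraMap [IsDomain R] (hp : Prime p) (hpP : p ∈ P) :
    Prime (algebraMap R (Localization.AtPrime P) p) := by
  have := (Ideal.span_singleton_prime hp.ne_zero).mpr hp
  have hmap := Ideal.isPrime_map_of_isLocalizationAtPrime P (S := Localization.AtPrime P)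
    ((Ideal.span_singleton_le_iff_mem _).mpr hpP)
  rw [Ideal.map_span, Set.image_singleton] at hmap
  refine (Ideal.span_singleton_prime ?_).mp hmap
  exact (map_ne_zero_iff _ (IsLocalization.injective _ P.primeCompl_le_nonZeroDivisors)).mpr
    hp.ne_zero

end LocalizationAtPrime

section Rxy

variable (k : Type*) [Field k] [(mxy k).IsPrime]

lemma prime_xx : Prime (xx k) :=
  Localization.AtPrime.prime_algebraMap X_prime (Ideal.subset_span (by simp))

lemma xx_not_dvd_yy : ¬ xx k ∣ yy k := by
  rw [Localization.AtPrime.algebraMap_dvd_algebraMap_iff X_prime (Ideal.subset_span (by simp)),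
    X_dvd_X]
  decide

variable {k} in
lemma xx_pow_dvd_of_dvd_mul_yy_pow {n j : ℕ} {a : Rxy k} (h : xx k ^ n ∣ a * yy k ^ j) :
    xx k ^ n ∣ a :=
  (prime_xx k).pow_dvd_of_dvd_mul_right n
    (fun hy => xx_not_dvd_yy k ((prime_xx k).dvd_of_dvd_pow hy)) h

lemma maximalIdeal_Rxy : IsLocalRing.maximalIdeal (Rxy k) = Ideal.span {xx k, yy k} := by
  rw [← Localization.AtPrime.map_eq_maximalIdeal, Ideal.map_span, Set.image_pair]

lemma mul_xx_pow_mem_span_pair_iff (n : ℕ) (r : Rxy k) :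
    r * xx k ^ n ∈ Ideal.span {xx k ^ (n + 1), xx k ^ n * yy k} ↔
      r ∈ IsLocalRing.maximalIdeal (Rxy k) := by
  have hx : xx k ^ n ≠ 0 := pow_ne_zero n (prime_xx k).ne_zero
  rw [maximalIdeal_Rxy, Ideal.mem_span_pair, Ideal.mem_span_pair]
  refine exists₂_congr fun u v => ⟨fun h => mul_right_cancel₀ hx ?_, fun h => ?_⟩
  · rw [← h]; ring
  · rw [← h]; ring

lemma span_pair_le_span_xx_pow (n : ℕ) :
    Ideal.span {xx k ^ (n + 1), xx k ^ n * yy k} ≤ Ideal.span {xx k ^ n} := by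
  rw [Ideal.span_le, Set.insert_subset_iff, Set.singleton_subset_iff]
  exact ⟨Ideal.mem_span_singleton.mpr (pow_dvd_pow _ n.le_succ),
    Ideal.mem_span_singleton.mpr (dvd_mul_right _ _)⟩

variable {k} in
lemma sat_le_span_xx_pow {n : ℕ} {K : Ideal (Rxy k)} (hK : K ≤ Ideal.span {xx k ^ n}) :
    sat K (IsLocalRing.maximalIdeal (Rxy k)) ≤ Ideal.span {xx k ^ n} := by
  refine iSup_le fun j a ha =>
    Ideal.mem_span_singleton.mpr (xx_pow_dvd_of_dvd_mul_yy_pow (j := j) ?_)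
  have hy : yy k ∈ IsLocalRing.maximalIdeal (Rxy k) := by
    rw [maximalIdeal_Rxy]
    exact Ideal.subset_span (by simp)
  exact Ideal.mem_span_singleton.mp (hK (Submodule.mem_colon.mp ha _ (Ideal.pow_mem_pow hy j)))

lemma sat_span_pair (n : ℕ) :
    sat (Ideal.span {xx k ^ (n + 1), xx k ^ n * yy k}) (IsLocalRing.maximalIdeal (Rxy k)) =
      Ideal.span {xx k ^ n} := by
  refine le_antisymm (sat_le_span_xx_pow (span_pair_le_span_xx_pow k n)) ?_
  rw [Ideal.span_le, Set.singleton_subset_iff]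
  exact mem_sat_of_forall_mul_mem fun r hr =>
    mul_comm r (xx k ^ n) ▸ (mul_xx_pow_mem_span_pair_iff k n r).mpr hr

lemma sat_span_xx_pow (n : ℕ) :
    sat (Ideal.span {xx k ^ n}) (IsLocalRing.maximalIdeal (Rxy k)) = Ideal.span {xx k ^ n} :=
  le_antisymm (sat_le_span_xx_pow le_rfl) le_sat

lemma mlength_idealQuot_span_pair (n : ℕ) :
    mlength (Rxy k) (idealQuot (Ideal.span {xx k ^ n})
      (Ideal.span {xx k ^ (n + 1), xx k ^ n * yy k})) = 1 := by
  have := isSimpleModule_idealQuot_span_singleton (IsLocalRing.maximalIdeal.isMaximal (Rxy k))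
    (mul_xx_pow_mem_span_pair_iff k n)
  rw [mlength_eq_length, Module.length_eq_one]

end Rxy

open Filter in
/-- in `R = k[x,y]_{(x,y)}` with `I_n = (xⁿ)`, `J_n = (x^{n+1}, xⁿy)`:
`J_n ⊆ I_n`, `J_n : m^∞ = (xⁿ)`, `λ_R((J_n : m^∞)/J_n) = 1`, and consequently
`ε({J_n}) = lim 2λ_R((J_n : m^∞)/J_n)/n² = 0 = ε({I_n})`. -/
theorem stmt11 (k : Type*) [Field k] [(mxy k).IsPrime]
    (I J : ℕ → Ideal (Rxy k))
    (hI : ∀ n, 1 ≤ n → I n = Ideal.span {xx k ^ n})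
    (hJ : ∀ n, 1 ≤ n → J n = Ideal.span {xx k ^ (n + 1), xx k ^ n * yy k}) :
    (∀ n, 1 ≤ n → J n ≤ I n) ∧
    (∀ n, 1 ≤ n → sat (J n) (IsLocalRing.maximalIdeal (Rxy k)) = Ideal.span {xx k ^ n}) ∧
    (∀ n, 1 ≤ n →
      mlength (Rxy k)
        (idealQuot (sat (J n) (IsLocalRing.maximalIdeal (Rxy k))) (J n)) = 1) ∧
    Tendsto (fun n : ℕ =>
        (2 * ((mlength (Rxy k)
          (idealQuot (sat (J n) (IsLocalRing.maximalIdeal (Rxy k))) (J n))).toNat : ℝ)) / n ^ 2)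
      atTop (nhds 0) ∧
    Tendsto (fun n : ℕ =>
        (2 * ((mlength (Rxy k)
          (idealQuot (sat (I n) (IsLocalRing.maximalIdeal (Rxy k))) (I n))).toNat : ℝ)) / n ^ 2)
      atTop (nhds 0) := by
  have hsatJ : ∀ n, 1 ≤ n →
      sat (J n) (IsLocalRing.maximalIdeal (Rxy k)) = Ideal.span {xx k ^ n} := fun n hn => by
    rw [hJ n hn, sat_span_pair]
  have hlenJ : ∀ n, 1 ≤ n →
      mlength (Rxy k) (idealQuot (sat (J n) (IsLocalRing.maximalIdeal (Rxy k))) (J n)) = 1 :=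
    fun n hn => by rw [hsatJ n hn, hJ n hn, mlength_idealQuot_span_pair]
  have hlenI : ∀ n, 1 ≤ n →
      mlength (Rxy k) (idealQuot (sat (I n) (IsLocalRing.maximalIdeal (Rxy k))) (I n)) = 0 :=
    fun n hn => by rw [hI n hn, sat_span_xx_pow, mlength_idealQuot_self]
  refine ⟨fun n hn => ?_, hsatJ, hlenJ, ?_, ?_⟩
  · rw [hI n hn, hJ n hn]
    exact span_pair_le_span_xx_pow k n
  · refine (tendsto_const_div_pow 2 2 two_ne_zero).congr' ?_
    filter_upwards [eventually_ge_atTop 1] with n hn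
    rw [hlenJ n hn]
    norm_num
  · refine tendsto_const_nhds.congr' ?_
    filter_upwards [eventually_ge_atTop 1] with n hn
    rw [hlenI n hn]
    norm_num
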